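/- Let f(ω) = ω coth ω for ω > 0, and define β = f'(ω)/(2ω f(ω) − ω² f'(ω)) and Λ = 2ω/(2ω f(ω) − ω² f'(ω)). Then the coefficient C₂ = g(2ω)⁻¹Λ²A(ω)²/16 + Λ²B(ω)²/32 + 3βω⁴/64 + (Λ f(ω)/16)(f(ω)f(2ω) − 3ω²) is strictly positive, where A(ω) = (3ω² − f(ω)² − 2f(ω)f(2ω))/2, B(ω) = ω² − f(ω)², and g(2ω) = 1 + 4βω² − Λ f(2ω) > 0. -/

import Mathlib

/-!
Write `s = sinh ω` and `c = cosh ω`, so `c² = 1 + s²`. Then `f(ω) = ωc/s`,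
`f(2ω) = ω(c² + s²)/(sc)` and `f'(ω) = c/s - ω/s²`, and the coefficients become rational
functions of `ω, s, c`: `g(2ω) = (3s + s³ - 3ωc) / (c(sc + ω))` and
`C₂ = ω² N / (64 s (sc + ω)² (3s + s³ - 3ωc))` for a polynomial `N`.
Three elementary inequalities of calculus settle all signs:
`s < ωc` (i.e. `tanh ω < ω`), `ω < sc` (i.e. `2ω < sinh 2ω`) and `3ωc < 3s + s³`.
The last makes `g(2ω)` and the denominator of `C₂` positive. The first two say that
`X = c(sc - ω)` and `Y = ωc - s` are nonnegative, and modulo `c² = 1 + s²` the polynomial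
`c²s²N` is an expression in `X, Y, s` that is visibly positive.
-/

open Real

lemma pos_of_map_zero_of_hasDerivAt_pos {f f' : ℝ → ℝ} (hf : ∀ y, HasDerivAt f (f' y) y)
    (hf' : ∀ y, 0 < y → 0 < f' y) (h0 : f 0 = 0) {x : ℝ} (hx : 0 < x) : 0 < f x := by
  have hmono : StrictMonoOn f (Set.Ici 0) :=
    strictMonoOn_of_hasDerivWithinAt_pos (convex_Ici 0)
      (fun y _ => (hf y).continuousAt.continuousWithinAt)
      (fun y _ => (hf y).hasDerivWithinAt)
      (fun y hy => hf' y (by simpa using hy))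
  simpa [h0] using hmono Set.self_mem_Ici hx.le hx

namespace Real

lemma sinh_lt_mul_cosh {x : ℝ} (hx : 0 < x) : sinh x < x * cosh x := by
  have key : 0 < x * cosh x - sinh x := by
    refine pos_of_map_zero_of_hasDerivAt_pos (f := fun y => y * cosh y - sinh y)
      (f' := fun y => y * sinh y) (fun y => ?_)
      (fun y hy => mul_pos hy (sinh_pos_iff.mpr hy)) (by simp) hx
    refine (((hasDerivAt_id' y).mul (hasDerivAt_cosh y)).sub (hasDerivAt_sinh y)).congr_deriv ?_
    ring
  linarith

lemma lt_sinh_mul_cosh {x : ℝ} (hx : 0 < x) : x < sinh x * cosh x := by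
  have := self_lt_sinh_iff.mpr (mul_pos two_pos hx)
  rw [sinh_two_mul] at this
  linarith

lemma three_mul_mul_cosh_lt {x : ℝ} (hx : 0 < x) :
    3 * (x * cosh x) < 3 * sinh x + sinh x ^ 3 := by
  have key : 0 < 3 * sinh x + sinh x ^ 3 - 3 * (x * cosh x) := by
    refine pos_of_map_zero_of_hasDerivAt_pos
      (f := fun y => 3 * sinh y + sinh y ^ 3 - 3 * (y * cosh y))
      (f' := fun y => 3 * sinh y * (sinh y * cosh y - y)) (fun y => ?_)
      (fun y hy => mul_pos (mul_pos three_pos (sinh_pos_iff.mpr hy))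
        (sub_pos.mpr (lt_sinh_mul_cosh hy)))
      (by simp) hx
    refine ((((hasDerivAt_sinh y).const_mul 3).add ((hasDerivAt_sinh y).pow 3)).sub
      (((hasDerivAt_id' y).mul (hasDerivAt_cosh y)).const_mul 3)).congr_deriv ?_
    norm_num
    ring
  linarith

lemma hasDerivAt_mul_cosh_div_sinh {x : ℝ} (hx : sinh x ≠ 0) :
    HasDerivAt (fun y => y * (cosh y / sinh y)) (cosh x / sinh x - x / sinh x ^ 2) x := by
  refine ((hasDerivAt_id' x).mul ((hasDerivAt_cosh x).div (hasDerivAt_sinh x) hx)).congr_deriv ?_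
  simp only [Pi.div_apply]
  field_simp
  linear_combination -x * cosh_sq' x

lemma two_mul_mul_cosh_div_sinh_two_mul (x : ℝ) :
    2 * x * (cosh (2 * x) / sinh (2 * x)) =
      x * (cosh x ^ 2 + sinh x ^ 2) / (sinh x * cosh x) := by
  rw [cosh_two_mul, sinh_two_mul]
  rcases eq_or_ne (sinh x) 0 with h | h
  · simp [h]
  · field_simp [(cosh_pos x).ne']

end Real

noncomputable section

namespace DaveyStewartson

-- `F`, `F₂`, `F'` stand for `f(ω)`, `f(2ω)`, `f'(ω)`.
variable (ω F F₂ F' : ℝ)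

def denom : ℝ := 2 * ω * F - ω ^ 2 * F'

def β : ℝ := F' / denom ω F F'

def Λ : ℝ := 2 * ω / denom ω F F'

def A : ℝ := (3 * ω ^ 2 - F ^ 2 - 2 * F * F₂) / 2

def B : ℝ := ω ^ 2 - F ^ 2

def g₂ : ℝ := 1 + 4 * β ω F F' * ω ^ 2 - Λ ω F F' * F₂

def C₂ : ℝ :=
  (g₂ ω F F₂ F')⁻¹ * Λ ω F F' ^ 2 * A ω F F₂ ^ 2 / 16 + Λ ω F F' ^ 2 * B ω F ^ 2 / 32 +
    3 * β ω F F' * ω ^ 4 / 64 + Λ ω F F' * F / 16 * (F * F₂ - 3 * ω ^ 2)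

lemma certificate_pos {X Y s : ℝ} (hX : 0 ≤ X) (hY : 0 ≤ Y) (hs : 0 < s) :
    0 < 11 * s ^ 12 + s ^ 3 * Y * (9 * X ^ 2 - 39 * X * s ^ 3 + 53 * s ^ 6)
      + s ^ 4 * (68 * s ^ 6 + 124 * Y * s ^ 3 + 18 * X ^ 2)
      + s ^ 2 * (224 * s ^ 6 + 4 * X * s ^ 3 + 24 * Y * (s ^ 3 + X))
      + s ^ 3 * (192 * s ^ 3 + 36 * X) + 72 * s ^ 4 := by
  have hq : 0 ≤ 9 * X ^ 2 - 39 * X * s ^ 3 + 53 * s ^ 6 := by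
    nlinarith [sq_nonneg (18 * X - 39 * s ^ 3), pow_nonneg hs.le 6]
  have := mul_nonneg (mul_nonneg (pow_nonneg hs.le 3) hY) hq
  have : 0 < 11 * s ^ 12 + s ^ 4 * (68 * s ^ 6 + 124 * Y * s ^ 3 + 18 * X ^ 2)
      + s ^ 2 * (224 * s ^ 6 + 4 * X * s ^ 3 + 24 * Y * (s ^ 3 + X))
      + s ^ 3 * (192 * s ^ 3 + 36 * X) + 72 * s ^ 4 := by positivity
  linarith

def numerator (ω s c : ℝ) : ℝ :=
  4 * c * s * (s * c + ω) * (s ^ 2 - 3 * c ^ 2) ^ 2 + 8 * s * (3 * s + s ^ 3 - 3 * ω * c)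
    + 3 * s * (s * c - ω) * (s * c + ω) * (3 * s + s ^ 3 - 3 * ω * c)
    + 8 * c * (s * c + ω) * (3 * s + s ^ 3 - 3 * ω * c) * (c ^ 2 - 2 * s ^ 2)

section Hyperbolic

variable {ω} {s c : ℝ}

lemma denom_eq (hs : s ≠ 0) :
    denom ω (ω * (c / s)) (c / s - ω / s ^ 2) = ω ^ 2 * (s * c + ω) / s ^ 2 := by
  unfold denom
  field_simp
  ring

lemma β_eq (hs : s ≠ 0) :
    β ω (ω * (c / s)) (c / s - ω / s ^ 2) = (s * c - ω) / (ω ^ 2 * (s * c + ω)) := by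
  rw [β, denom_eq hs]
  field_simp

lemma Λ_eq (hs : s ≠ 0) :
    Λ ω (ω * (c / s)) (c / s - ω / s ^ 2) = 2 * s ^ 2 / (ω * (s * c + ω)) := by
  rw [Λ, denom_eq hs]
  field_simp

lemma g₂_eq (hω : ω ≠ 0) (hs : s ≠ 0) (hc : c ≠ 0) (he : s * c + ω ≠ 0)
    (hsc : c ^ 2 = 1 + s ^ 2) :
    g₂ ω (ω * (c / s)) (ω * (c ^ 2 + s ^ 2) / (s * c)) (c / s - ω / s ^ 2) =
      (3 * s + s ^ 3 - 3 * ω * c) / ((s * c + ω) * c) := by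
  rw [g₂, β_eq hs, Λ_eq hs]
  field_simp
  linear_combination 3 * s * hsc

lemma A_eq (hs : s ≠ 0) (hc : c ≠ 0) :
    A ω (ω * (c / s)) (ω * (c ^ 2 + s ^ 2) / (s * c)) =
      ω ^ 2 * (s ^ 2 - 3 * c ^ 2) / (2 * s ^ 2) := by
  unfold A
  field_simp
  ring

lemma B_eq (hs : s ≠ 0) (hsc : c ^ 2 = 1 + s ^ 2) : B ω (ω * (c / s)) = -ω ^ 2 / s ^ 2 := by
  unfold B
  field_simp
  linear_combination -ω ^ 2 * hsc

lemma C₂_eq (hω : ω ≠ 0) (hs : s ≠ 0) (hc : c ≠ 0) (he : s * c + ω ≠ 0)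
    (hm : 3 * s + s ^ 3 - 3 * ω * c ≠ 0) (hsc : c ^ 2 = 1 + s ^ 2) :
    C₂ ω (ω * (c / s)) (ω * (c ^ 2 + s ^ 2) / (s * c)) (c / s - ω / s ^ 2) =
      ω ^ 2 * numerator ω s c / (64 * s * (s * c + ω) ^ 2 * (3 * s + s ^ 3 - 3 * ω * c)) := by
  rw [C₂, g₂_eq hω hs hc he hsc, β_eq hs, Λ_eq hs, A_eq hs hc, B_eq hs hsc]
  unfold numerator
  generalize 3 * s + s ^ 3 - 3 * ω * c = m at *
  field_simp
  ring

lemma numerator_pos (hs : 0 < s) (hc : 0 < c) (hsc : c ^ 2 = 1 + s ^ 2) (h₁ : s < ω * c)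
    (h₂ : ω < s * c) :
    0 < numerator ω s c := by
  unfold numerator
  refine pos_of_mul_pos_right (a := c ^ 2 * s ^ 2) ((certificate_pos (X := c * (s * c - ω))
    (Y := ω * c - s) (mul_nonneg hc.le (by linarith)) (by linarith) hs).trans_eq ?_) (by positivity)
  linear_combination -(11 * s ^ 10 + 11 * s ^ 8 * c ^ 2 + 4 * s ^ 8 + 20 * s ^ 6 * c ^ 4
      + 32 * s ^ 6 * c ^ 2 + 96 * s ^ 6 + 36 * s ^ 4 * c ^ 6 + 60 * s ^ 4 * c ^ 4
      + 60 * s ^ 4 * c ^ 2 + 72 * s ^ 4 + 42 * ω ^ 2 * s ^ 4 * c ^ 2 - 24 * ω ^ 2 * s ^ 2 * c ^ 4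
      - 24 * ω ^ 2 * s ^ 2 * c ^ 2 + 53 * ω * s ^ 7 * c + 26 * ω * s ^ 5 * c ^ 3
      + 32 * ω * s ^ 5 * c + 12 * ω * s ^ 3 * c ^ 5 + 36 * ω * s ^ 3 * c ^ 3
      - 12 * ω * s ^ 3 * c) * hsc

lemma g₂_pos (hω : 0 < ω) (hs : 0 < s) (hc : 0 < c) (hsc : c ^ 2 = 1 + s ^ 2)
    (h₃ : 3 * (ω * c) < 3 * s + s ^ 3) :
    0 < g₂ ω (ω * (c / s)) (ω * (c ^ 2 + s ^ 2) / (s * c)) (c / s - ω / s ^ 2) := by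
  rw [g₂_eq hω.ne' hs.ne' hc.ne' (by positivity) hsc]
  exact div_pos (by linarith) (by positivity)

lemma C₂_pos (hω : 0 < ω) (hs : 0 < s) (hc : 0 < c) (hsc : c ^ 2 = 1 + s ^ 2)
    (h₁ : s < ω * c) (h₂ : ω < s * c) (h₃ : 3 * (ω * c) < 3 * s + s ^ 3) :
    0 < C₂ ω (ω * (c / s)) (ω * (c ^ 2 + s ^ 2) / (s * c)) (c / s - ω / s ^ 2) := by
  have hm : 0 < 3 * s + s ^ 3 - 3 * ω * c := by linarith
  rw [C₂_eq hω.ne' hs.ne' hc.ne' (by positivity) hm.ne' hsc]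
  exact div_pos (mul_pos (pow_pos hω 2) (numerator_pos hs hc hsc h₁ h₂)) (by positivity)

end Hyperbolic

end DaveyStewartson

end

/-- Positivity of the Davey–Stewartson coefficient `C₂`, after
substituting `β = f'(ω)/(2ωf(ω) − ω²f'(ω))` and `Λ = 2ω/(2ωf(ω) − ω²f'(ω))`, where
`f(s) = s coth s`.  The claim also includes `g(2ω) = 1 + 4βω² − Λf(2ω) > 0`. -/
theorem C2_positive (ω : ℝ) (hω : 0 < ω) :
    let f : ℝ → ℝ := fun s => s * (Real.cosh s / Real.sinh s)
    let fp : ℝ → ℝ := deriv f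
    let β := fp ω / (2 * ω * f ω - ω ^ 2 * fp ω)
    let Λ := 2 * ω / (2 * ω * f ω - ω ^ 2 * fp ω)
    let A := (3 * ω ^ 2 - f ω ^ 2 - 2 * f ω * f (2 * ω)) / 2
    let B := ω ^ 2 - f ω ^ 2
    let g2 := 1 + 4 * β * ω ^ 2 - Λ * f (2 * ω)
    let C₂ := g2⁻¹ * Λ ^ 2 * A ^ 2 / 16 + Λ ^ 2 * B ^ 2 / 32 + 3 * β * ω ^ 4 / 64 +
      Λ * f ω / 16 * (f ω * f (2 * ω) - 3 * ω ^ 2)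
    0 < g2 ∧ 0 < C₂ := by
  intro f fp _ _ _ _ _ _
  have hs : 0 < sinh ω := sinh_pos_iff.mpr hω
  have hf₂ : f (2 * ω) = ω * (cosh ω ^ 2 + sinh ω ^ 2) / (sinh ω * cosh ω) :=
    two_mul_mul_cosh_div_sinh_two_mul ω
  have hfp : fp ω = cosh ω / sinh ω - ω / sinh ω ^ 2 :=
    (hasDerivAt_mul_cosh_div_sinh hs.ne').deriv
  show 0 < DaveyStewartson.g₂ ω (f ω) (f (2 * ω)) (fp ω) ∧
    0 < DaveyStewartson.C₂ ω (f ω) (f (2 * ω)) (fp ω)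
  rw [hf₂, hfp]
  exact ⟨DaveyStewartson.g₂_pos hω hs (cosh_pos ω) (cosh_sq' ω) (three_mul_mul_cosh_lt hω),
    DaveyStewartson.C₂_pos hω hs (cosh_pos ω) (cosh_sq' ω) (sinh_lt_mul_cosh hω)
      (lt_sinh_mul_cosh hω) (three_mul_mul_cosh_lt hω)⟩
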